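/- arXiv:1407.6831 — 2 statements merged into one kernel-verified Lean document; each statement's English description precedes it below -/
import Mathlib

section
/- Equivalently, (1-w)∑_{n≥0} w^n P(L(n) < ℓ) = (1-w)(1-(wp)^ℓ)/(1-w + wq(wp)^ℓ) for all 0 < w < 1 and ℓ ≥ 1. -/
open scoped Classical
open Finset Filter

noncomputable section

/-- Weight (probability) of a Boolean string of length `n` under i.i.d. Bernoulli(p). -/
def wt (p : ℝ) {n : ℕ} (x : Fin n → Bool) : ℝ :=
  ∏ i, (if x i then p else 1 - p)

/-- Extend a finite string by `false`. -/
def pad {n : ℕ} (x : Fin n → Bool) : ℕ → Bool :=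
  fun i => if h : i < n then x ⟨i, h⟩ else false

/-- A maximal run of 1's of length exactly `ℓ` starts at position `i` (0-indexed)
within the first `n` positions. -/
def IsRunAt (x : ℕ → Bool) (n i ℓ : ℕ) : Prop :=
  1 ≤ ℓ ∧ i + ℓ ≤ n ∧ (∀ k < ℓ, x (i + k) = true) ∧
    (i = 0 ∨ x (i - 1) = false) ∧ (i + ℓ = n ∨ x (i + ℓ) = false)

/-- `R_ℓ(n)`: the number of maximal runs of 1's of length exactly `ℓ` in the first `n` tosses. -/
def runCount (x : ℕ → Bool) (n ℓ : ℕ) : ℕ :=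
  ((Finset.range n).filter (fun i => IsRunAt x n i ℓ)).card

/-- `G_ℓ(n)`: the number of maximal runs of 1's of length at least `ℓ` in the first `n` tosses. -/
def excCount (x : ℕ → Bool) (n ℓ : ℕ) : ℕ :=
  ∑ k ∈ Finset.Icc ℓ n, runCount x n k

/-- `L(n)`: the length of the longest run of 1's in the first `n` tosses. -/
def longestRun (x : ℕ → Bool) (n : ℕ) : ℕ :=
  (Finset.range (n + 1)).sup
    (fun ℓ => if ∃ i, i + ℓ ≤ n ∧ ∀ k < ℓ, x (i + k) = true then ℓ else 0)

/-- Expectation of a (real) functional of `n` i.i.d. Bernoulli(p) tosses. -/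
def Ex (p : ℝ) (n : ℕ) (f : (ℕ → Bool) → ℝ) : ℝ :=
  ∑ x : Fin n → Bool, wt p x * f (pad x)

/-- Expectation of a complex functional of `n` i.i.d. Bernoulli(p) tosses. -/
def ExC (p : ℝ) (n : ℕ) (f : (ℕ → Bool) → ℂ) : ℂ :=
  ∑ x : Fin n → Bool, (wt p x : ℂ) * f (pad x)

/-- Probability of an event depending on the first `n` i.i.d. Bernoulli(p) tosses. -/
def Pr (p : ℝ) (n : ℕ) (A : Set (ℕ → Bool)) : ℝ :=
  ∑ x : Fin n → Bool, if pad x ∈ A then wt p x else 0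

/-- Binomial coefficient with integer upper argument, vanishing for negative upper argument. -/
def C (a : ℤ) (b : ℕ) : ℝ :=
  if a < 0 then 0 else (a.toNat).choose b

/-! ### Auxiliary lemmas -/

section Aux

variable {p : ℝ}

lemma pad_lt {n : ℕ} (x : Fin n → Bool) {i : ℕ} (h : i < n) : pad x i = x ⟨i, h⟩ := dif_pos h

lemma pad_snoc_lt {n : ℕ} (x : Fin n → Bool) (b : Bool) {i : ℕ} (h : i < n) :
    pad (Fin.snoc x b) i = pad x i := by
  rw [pad_lt _ (h.trans (Nat.lt_succ_self n)), pad_lt _ h]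
  simp [Fin.snoc, h]

lemma pad_snoc_last {n : ℕ} (x : Fin n → Bool) (b : Bool) :
    pad (Fin.snoc x b) n = b := by
  rw [pad_lt _ (Nat.lt_succ_self n)]
  simp [Fin.snoc]

lemma pad_append_lt {m k : ℕ} (x : Fin m → Bool) (y : Fin k → Bool) {i : ℕ} (h : i < m) :
    pad (Fin.append x y) i = pad x i := by
  rw [pad_lt _ (h.trans_le (Nat.le_add_right m k)), pad_lt _ h]
  exact Fin.append_left x y ⟨i, h⟩

lemma pad_append_add {m k : ℕ} (x : Fin m → Bool) (y : Fin k → Bool) {j : ℕ} (h : j < k) :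
    pad (Fin.append x y) (m + j) = y ⟨j, h⟩ := by
  rw [pad_lt _ (by omega : m + j < m + k)]
  exact Fin.append_right x y ⟨j, h⟩

lemma sum_snoc {n : ℕ} (F : (Fin (n+1) → Bool) → ℝ) :
    ∑ z : Fin (n+1) → Bool, F z = ∑ x : Fin n → Bool, ∑ b : Bool, F (Fin.snoc x b) := by
  rw [← Equiv.sum_comp (Fin.snocEquiv (fun _ => Bool)) F, Fintype.sum_prod_type,
    Finset.sum_comm]
  rfl

lemma sum_append {m k : ℕ} (F : (Fin (m+k) → Bool) → ℝ) :
    ∑ z : Fin (m+k) → Bool, F z = ∑ x : Fin m → Bool, ∑ y : Fin k → Bool, F (Fin.append x y) := by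
  rw [← Equiv.sum_comp (Fin.appendEquiv m k) F, Fintype.sum_prod_type]
  rfl

lemma wt_snoc (p : ℝ) {n : ℕ} (x : Fin n → Bool) (b : Bool) :
    wt p (Fin.snoc x b) = wt p x * (if b then p else 1 - p) := by
  unfold wt
  rw [Fin.prod_univ_castSucc]
  simp

lemma wt_append (p : ℝ) {m k : ℕ} (x : Fin m → Bool) (y : Fin k → Bool) :
    wt p (Fin.append x y) = wt p x * wt p y := by
  unfold wt
  rw [Fin.prod_univ_add]
  simp

lemma wt_nonneg (hp0 : 0 ≤ p) (hp1 : p ≤ 1) {n : ℕ} (x : Fin n → Bool) : 0 ≤ wt p x := by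
  unfold wt
  apply Finset.prod_nonneg
  intro i _
  split <;> linarith

lemma sum_wt (p : ℝ) (n : ℕ) : ∑ x : Fin n → Bool, wt p x = 1 := by
  induction n with
  | zero => simp [wt]
  | succ n ih =>
    rw [sum_snoc]
    have h : ∀ x : Fin n → Bool, ∑ b : Bool, wt p (Fin.snoc x b) = wt p x := by
      intro x
      rw [Fintype.sum_bool, wt_snoc, wt_snoc]
      simp; ring
    rw [Finset.sum_congr rfl (fun x _ => h x), ih]

lemma wt_const_true (p : ℝ) (n : ℕ) : wt p (fun _ : Fin n => true) = p ^ n := by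
  simp [wt]

/-! ### longestRun lemmas -/

lemma longestRun_le (z : ℕ → Bool) (n : ℕ) : longestRun z n ≤ n := by
  apply Finset.sup_le
  intro l hl
  split
  · exact Nat.lt_succ_iff.mp (Finset.mem_range.mp hl)
  · exact Nat.zero_le n

lemma le_longestRun_iff {z : ℕ → Bool} {n ℓ : ℕ} (hℓ : 1 ≤ ℓ) :
    ℓ ≤ longestRun z n ↔ ∃ i, i + ℓ ≤ n ∧ ∀ k < ℓ, z (i + k) = true := by
  unfold longestRun
  rw [Finset.le_sup_iff (show (⊥ : ℕ) < ℓ from hℓ)]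
  constructor
  · rintro ⟨l', _, hle⟩
    split at hle
    · next hP =>
      obtain ⟨i, hi, hk⟩ := hP
      exact ⟨i, by omega, fun k hk' => hk k (by omega)⟩
    · omega
  · rintro ⟨i, hi, hk⟩
    refine ⟨ℓ, by simp only [Finset.mem_range]; omega, ?_⟩
    rw [if_pos ⟨i, hi, hk⟩]

lemma longestRun_mono (z : ℕ → Bool) {n n' : ℕ} (h : n ≤ n') :
    longestRun z n ≤ longestRun z n' := by
  unfold longestRun
  apply Finset.sup_le
  intro l hl
  split
  · next hP =>
    obtain ⟨i, hi, hk⟩ := hP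
    have hmem : l ∈ Finset.range (n' + 1) := by
      rw [Finset.mem_range] at hl ⊢; omega
    have h2 := Finset.le_sup (f := fun l =>
      if ∃ i, i + l ≤ n' ∧ ∀ k < l, z (i + k) = true then l else 0) hmem
    rw [if_pos ⟨i, by omega, hk⟩] at h2
    exact h2
  · exact Nat.zero_le _

lemma longestRun_congr {z z' : ℕ → Bool} {n : ℕ} (h : ∀ i < n, z i = z' i) :
    longestRun z n = longestRun z' n := by
  unfold longestRun
  apply Finset.sup_congr rfl
  intro l _
  have hiff : (∃ i, i + l ≤ n ∧ ∀ k < l, z (i + k) = true) ↔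
      (∃ i, i + l ≤ n ∧ ∀ k < l, z' (i + k) = true) := by
    constructor <;> rintro ⟨i, hi, hk⟩ <;> refine ⟨i, hi, fun k hk' => ?_⟩
    · rw [← h (i + k) (by omega)]; exact hk k hk'
    · rw [h (i + k) (by omega)]; exact hk k hk'
  rw [hiff]

lemma key_iff {z : ℕ → Bool} {ℓ m n : ℕ} (hℓ : 1 ≤ ℓ) (hn : m + ℓ = n + 1) :
    (longestRun z n < ℓ ∧ ¬ longestRun z (n+1) < ℓ) ↔
      ((∀ k < ℓ, z (m + k) = true) ∧
        (m = 0 ∨ (z (m - 1) = false ∧ longestRun z (m - 1) < ℓ))) := by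
  have hch : ∀ N : ℕ, longestRun z N < ℓ ↔ ¬ ∃ i, i + ℓ ≤ N ∧ ∀ k < ℓ, z (i + k) = true := by
    intro N; rw [← not_le, le_longestRun_iff hℓ]
  simp only [hch, not_not]
  constructor
  · rintro ⟨hn1, i, hi, hk⟩
    have him : i = m := by
      rcases Nat.lt_trichotomy i m with h' | h' | h'
      · exact absurd ⟨i, by omega, hk⟩ hn1
      · exact h'
      · omega
    rw [him] at hk
    refine ⟨hk, ?_⟩
    rcases Nat.eq_zero_or_pos m with h0 | h0
    · exact Or.inl h0
    right
    constructor
    · cases hzz : z (m - 1) with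
      | false => rfl
      | true =>
        exfalso
        apply hn1
        refine ⟨m - 1, by omega, fun k hk' => ?_⟩
        rcases Nat.eq_zero_or_pos k with rfl | hk0
        · simpa using hzz
        · have heq : m - 1 + k = m + (k - 1) := by omega
          rw [heq]; exact hk _ (by omega)
    · rintro ⟨i', hi', hk'⟩
      exact hn1 ⟨i', by omega, hk'⟩
  · rintro ⟨hk, hm⟩
    refine ⟨?_, ⟨m, by omega, hk⟩⟩
    rintro ⟨i, hi, hik⟩
    rcases Nat.eq_zero_or_pos m with rfl | hm0
    · omega
    rcases hm with h0 | ⟨hzf, hLm⟩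
    · omega
    by_cases hcase : i + ℓ ≤ m - 1
    · exact hLm ⟨i, hcase, hik⟩
    · have h2 := hik (m - 1 - i) (by omega)
      rw [show i + (m - 1 - i) = m - 1 by omega, hzf] at h2
      exact Bool.false_ne_true h2

/-! ### Pr lemmas -/

lemma Pr_nonneg (hp0 : 0 ≤ p) (hp1 : p ≤ 1) (n : ℕ) (A : Set (ℕ → Bool)) : 0 ≤ Pr p n A :=
  Finset.sum_nonneg fun x _ => by
    split
    · exact wt_nonneg hp0 hp1 x
    · exact le_refl 0

lemma Pr_le_one (hp0 : 0 ≤ p) (hp1 : p ≤ 1) (n : ℕ) (A : Set (ℕ → Bool)) : Pr p n A ≤ 1 := by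
  calc Pr p n A ≤ ∑ x : Fin n → Bool, wt p x := by
        apply Finset.sum_le_sum
        intro x _
        split
        · exact le_refl _
        · exact wt_nonneg hp0 hp1 x
    _ = 1 := sum_wt p n

lemma Pr_succ (p : ℝ) (n : ℕ) (A : Set (ℕ → Bool))
    (hA : ∀ z z', (∀ i < n, z i = z' i) → (z ∈ A ↔ z' ∈ A)) :
    Pr p (n+1) A = Pr p n A := by
  unfold Pr
  rw [sum_snoc]
  apply Finset.sum_congr rfl
  intro x _
  have hmem : ∀ b, (pad (Fin.snoc x b) ∈ A) = (pad x ∈ A) := fun b =>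
    propext (hA _ _ (fun i hi => pad_snoc_lt x b hi))
  rw [Fintype.sum_bool, hmem, hmem, wt_snoc, wt_snoc]
  by_cases h : pad x ∈ A <;> simp [h] <;> ring

lemma Pr_diff (p : ℝ) (n : ℕ) (A B : Set (ℕ → Bool)) (h : ∀ z, z ∈ B → z ∈ A) :
    Pr p n A - Pr p n B = Pr p n {z | z ∈ A ∧ z ∉ B} := by
  unfold Pr
  rw [← Finset.sum_sub_distrib]
  apply Finset.sum_congr rfl
  intro x _
  by_cases hB : pad x ∈ B
  · simp [hB, h _ hB]
  · by_cases hA : pad x ∈ A <;> simp [Set.mem_setOf_eq, hA, hB]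

lemma f_small (p : ℝ) {ℓ n : ℕ} (h : n < ℓ) : Pr p n {x | longestRun x n < ℓ} = 1 := by
  unfold Pr
  have hmem : ∀ x : Fin n → Bool, pad x ∈ {x : ℕ → Bool | longestRun x n < ℓ} := fun x =>
    lt_of_le_of_lt (longestRun_le _ _) h
  exact (Finset.sum_congr rfl fun x _ => if_pos (hmem x)).trans (sum_wt p n)

lemma step_aux (p : ℝ) (ℓ t : ℕ) :
    Pr p ((t+1) + ℓ) {z | (∀ k < ℓ, z (t+1+k) = true) ∧ z t = false ∧ longestRun z t < ℓ}
      = (1-p) * p^ℓ * Pr p t {x | longestRun x t < ℓ} := by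
  have hsumy : ∑ y : Fin ℓ → Bool, (if y = (fun _ => true) then wt p y else 0) = p ^ ℓ := by
    rw [Finset.sum_ite_eq' Finset.univ (fun _ => true) (wt p), if_pos (Finset.mem_univ _),
      wt_const_true]
  have hsumx : ∑ x : Fin (t+1) → Bool,
      (if pad x t = false ∧ longestRun (pad x) t < ℓ then wt p x else 0)
      = (1-p) * Pr p t {x | longestRun x t < ℓ} := by
    rw [Pr, Finset.mul_sum, sum_snoc]
    apply Finset.sum_congr rfl
    intro x _
    rw [Fintype.sum_bool]
    have hA : ∀ b : Bool, longestRun (pad (Fin.snoc x b)) t = longestRun (pad x) t :=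
      fun b => longestRun_congr (fun i hi => pad_snoc_lt x b (by omega))
    rw [hA, hA, pad_snoc_last, pad_snoc_last, wt_snoc, wt_snoc]
    simp only [Set.mem_setOf_eq]
    by_cases h : longestRun (pad x) t < ℓ <;> simp [h] <;> ring
  rw [Pr, sum_append]
  trans (∑ x : Fin (t+1) → Bool,
      ((if pad x t = false ∧ longestRun (pad x) t < ℓ then wt p x else 0) * p ^ ℓ))
  · apply Finset.sum_congr rfl
    intro x _
    rw [← hsumy, Finset.mul_sum]
    apply Finset.sum_congr rfl
    intro y _
    have h1 : (∀ k < ℓ, pad (Fin.append x y) (t+1+k) = true) ↔ y = (fun _ => true) := by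
      constructor
      · intro h
        funext k
        have hk := h k.1 k.isLt
        rwa [pad_append_add x y k.isLt, Fin.eta] at hk
      · rintro rfl k hk
        rw [pad_append_add x _ hk]
    have h2 : pad (Fin.append x y) t = pad x t := pad_append_lt x y (by omega)
    have h3 : longestRun (pad (Fin.append x y)) t = longestRun (pad x) t :=
      longestRun_congr (fun i hi => pad_append_lt x y (by omega))
    simp only [Set.mem_setOf_eq, h1, h2, h3, wt_append]
    by_cases hy : y = (fun _ => true) <;>
      by_cases hx : pad x t = false ∧ longestRun (pad x) t < ℓ <;>
      simp [hy, hx]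
  · rw [← Finset.sum_mul, hsumx]
    ring

lemma f_ell (p : ℝ) {ℓ : ℕ} (hℓ : 1 ≤ ℓ) :
    Pr p ℓ {x | longestRun x ℓ < ℓ} = 1 - p ^ ℓ := by
  have h1 : Pr p (ℓ-1) {x | longestRun x (ℓ-1) < ℓ} = 1 := f_small p (by omega)
  have h2 : Pr p ℓ {x | longestRun x (ℓ-1) < ℓ} = 1 := by
    have hs := Pr_succ p (ℓ-1) {x | longestRun x (ℓ-1) < ℓ} (fun z z' h => by
      simp only [Set.mem_setOf_eq]
      rw [longestRun_congr h])
    rw [show ℓ - 1 + 1 = ℓ by omega] at hs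
    rw [hs, h1]
  have hsub : ∀ z : ℕ → Bool, z ∈ {x : ℕ → Bool | longestRun x ℓ < ℓ} →
      z ∈ {x : ℕ → Bool | longestRun x (ℓ-1) < ℓ} :=
    fun z hz => lt_of_le_of_lt (longestRun_mono z (by omega)) hz
  have hdiff := Pr_diff p ℓ _ _ hsub
  have hset : {z : ℕ → Bool | z ∈ {x : ℕ → Bool | longestRun x (ℓ-1) < ℓ}
        ∧ z ∉ {x : ℕ → Bool | longestRun x ℓ < ℓ}}
      = {z : ℕ → Bool | ∀ k < ℓ, z k = true} := by
    ext z
    simp only [Set.mem_setOf_eq]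
    have hk := key_iff (z := z) hℓ (m := 0) (n := ℓ - 1) (by omega)
    rw [show ℓ - 1 + 1 = ℓ by omega] at hk
    rw [hk]
    simp
  rw [hset] at hdiff
  have hPE : Pr p ℓ {z : ℕ → Bool | ∀ k < ℓ, z k = true} = p ^ ℓ := by
    have hmem : ∀ x : Fin ℓ → Bool,
        (pad x ∈ {z : ℕ → Bool | ∀ k < ℓ, z k = true}) ↔ x = (fun _ => true) := by
      intro x
      constructor
      · intro h; funext k
        have := h k.1 k.isLt
        rwa [pad_lt x k.isLt, Fin.eta] at this
      · rintro rfl k hk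
        rw [pad_lt _ hk]
    rw [Pr]
    trans (∑ x : Fin ℓ → Bool, if x = (fun _ => true) then wt p x else 0)
    · apply Finset.sum_congr rfl
      intro x _
      by_cases h : x = (fun _ => true)
      · rw [if_pos ((hmem x).mpr h), if_pos h]
      · rw [if_neg (fun hc => h ((hmem x).mp hc)), if_neg h]
    · rw [Finset.sum_ite_eq' Finset.univ (fun _ => true) (wt p), if_pos (Finset.mem_univ _),
        wt_const_true]
  rw [hPE] at hdiff
  linarith

lemma f_step (p : ℝ) {ℓ : ℕ} (hℓ : 1 ≤ ℓ) (t : ℕ) :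
    Pr p (ℓ+t+1) {x | longestRun x (ℓ+t+1) < ℓ}
      = Pr p (ℓ+t) {x | longestRun x (ℓ+t) < ℓ}
        - (1-p) * p^ℓ * Pr p t {x | longestRun x t < ℓ} := by
  have h1 : Pr p (ℓ+t) {x | longestRun x (ℓ+t) < ℓ}
      = Pr p (ℓ+t+1) {x | longestRun x (ℓ+t) < ℓ} :=
    (Pr_succ p (ℓ+t) _ (fun z z' h => by
      simp only [Set.mem_setOf_eq]
      rw [longestRun_congr h])).symm
  have hsub : ∀ z : ℕ → Bool, z ∈ {x : ℕ → Bool | longestRun x (ℓ+t+1) < ℓ} →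
      z ∈ {x : ℕ → Bool | longestRun x (ℓ+t) < ℓ} :=
    fun z hz => lt_of_le_of_lt (longestRun_mono z (Nat.le_succ _)) hz
  have hdiff := Pr_diff p (ℓ+t+1) _ _ hsub
  have hset : {z : ℕ → Bool | z ∈ {x : ℕ → Bool | longestRun x (ℓ+t) < ℓ}
        ∧ z ∉ {x : ℕ → Bool | longestRun x (ℓ+t+1) < ℓ}}
      = {z : ℕ → Bool | (∀ k < ℓ, z (t+1+k) = true) ∧ z t = false ∧ longestRun z t < ℓ} := by
    ext z
    simp only [Set.mem_setOf_eq]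
    rw [key_iff (z := z) hℓ (m := t+1) (n := ℓ+t) (by omega)]
    constructor
    · rintro ⟨hk, hm⟩
      refine ⟨hk, ?_⟩
      rcases hm with h0 | h'
      · omega
      · simpa using h'
    · rintro ⟨hk, hz, hL⟩
      exact ⟨hk, Or.inr (by simpa using And.intro hz hL)⟩
  rw [hset] at hdiff
  have haux := step_aux p ℓ t
  rw [show (t+1)+ℓ = ℓ+t+1 by omega] at haux
  rw [h1]
  linarith

/-- The analytic computation with the generating function. -/
lemma analytic (p : ℝ) (hp : 0 < p) (hp1 : p < 1) (ℓ : ℕ) (hℓ : 1 ≤ ℓ)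
    (w : ℝ) (hw : 0 < w) (hw1 : w < 1) (f : ℕ → ℝ)
    (hf0 : ∀ n, 0 ≤ f n) (hf1 : ∀ n, f n ≤ 1)
    (hsmall : ∀ n < ℓ, f n = 1) (hell : f ℓ = 1 - p ^ ℓ)
    (hstep : ∀ t, f (ℓ+t+1) = f (ℓ+t) - (1-p) * p^ℓ * f t) :
    (1 - w) * ∑' n : ℕ, w ^ n * f n =
      (1 - w) * (1 - (w * p) ^ ℓ) / (1 - w + w * (1 - p) * (w * p) ^ ℓ) := by
  have hg : Summable (fun n => w ^ n * f n) := by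
    apply Summable.of_nonneg_of_le (fun n => mul_nonneg (pow_nonneg hw.le n) (hf0 n))
      (fun n => ?_) (summable_geometric_of_lt_one hw.le hw1)
    have := mul_le_of_le_one_right (pow_nonneg hw.le n) (hf1 n)
    simpa using this
  set F := ∑' n : ℕ, w ^ n * f n with hF
  have hshift : Summable (fun n => w ^ (n+1) * f (n+1)) :=
    (summable_nat_add_iff 1).mpr hg
  have hterm1 : Summable (fun n => w ^ (n+1) * f n) := by
    have h := hg.mul_left w
    have he : (fun n => w * (w ^ n * f n)) = (fun n => w ^ (n+1) * f n) := by
      funext n; ring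
    rwa [he] at h
  have hA : ∑' n : ℕ, w ^ (n+1) * f n = w * F := by
    have he : (fun n : ℕ => w ^ (n+1) * f n) = (fun n : ℕ => w * (w ^ n * f n)) := by
      funext n; ring
    rw [he, tsum_mul_left]
  have hB : ∑' n : ℕ, w ^ (n+1) * f (n+1) = F - f 0 := by
    have h := Summable.tsum_eq_zero_add hg
    simp only [pow_zero, one_mul] at h
    rw [hF]
    linarith [h]
  have hd : Summable (fun n => w ^ (n+1) * f n - w ^ (n+1) * f (n+1)) := hterm1.sub hshift
  have htel : ∑' n : ℕ, (w ^ (n+1) * f n - w ^ (n+1) * f (n+1)) = w * F - (F - f 0) := by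
    rw [Summable.tsum_sub hterm1 hshift, hA, hB]
  have hsplit := Summable.sum_add_tsum_nat_add (f := fun n => w ^ (n+1) * f n - w ^ (n+1) * f (n+1)) ℓ hd
  have hrange : ∑ n ∈ Finset.range ℓ, (w ^ (n+1) * f n - w ^ (n+1) * f (n+1))
      = w ^ ℓ * p ^ ℓ := by
    rw [Finset.sum_eq_single (ℓ - 1)]
    · rw [show ℓ - 1 + 1 = ℓ by omega, hsmall (ℓ-1) (by omega), hell]
      ring
    · intro n hn hne
      have hn' := Finset.mem_range.mp hn
      rw [hsmall n (by omega), hsmall (n+1) (by omega)]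
      ring
    · intro h
      exact absurd (Finset.mem_range.mpr (by omega)) h
  have htail : ∀ i : ℕ, w ^ (i+ℓ+1) * f (i+ℓ) - w ^ (i+ℓ+1) * f (i+ℓ+1)
      = ((1-p) * p^ℓ * w^(ℓ+1)) * (w ^ i * f i) := by
    intro i
    have hs := hstep i
    rw [show i + ℓ = ℓ + i by omega, hs]
    ring
  have htailsum : ∑' i : ℕ, (w ^ (i+ℓ+1) * f (i+ℓ) - w ^ (i+ℓ+1) * f (i+ℓ+1))
      = (1-p) * p^ℓ * w^(ℓ+1) * F := by
    have he : (fun i : ℕ => w ^ (i+ℓ+1) * f (i+ℓ) - w ^ (i+ℓ+1) * f (i+ℓ+1))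
        = (fun i : ℕ => ((1-p) * p^ℓ * w^(ℓ+1)) * (w ^ i * f i)) := funext htail
    rw [he, tsum_mul_left]
  rw [htel, hrange, htailsum] at hsplit
  have hf0' : f 0 = 1 := hsmall 0 (by omega)
  -- combined identity
  have hcomb : w * F - (F - 1) = w ^ ℓ * p ^ ℓ + (1-p) * p^ℓ * w^(ℓ+1) * F := by
    rw [hf0'] at hsplit
    linarith [hsplit]
  have ha : (w * p) ^ ℓ = w ^ ℓ * p ^ ℓ := mul_pow w p ℓ
  have hwsucc : w ^ (ℓ+1) = w * w ^ ℓ := pow_succ' w ℓ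
  have haN : 0 ≤ (w * p) ^ ℓ := pow_nonneg (by positivity) ℓ
  have hD : 0 < 1 - w + w * (1 - p) * (w * p) ^ ℓ := by
    have h1 : 0 ≤ w * (1 - p) * (w * p) ^ ℓ :=
      mul_nonneg (mul_nonneg hw.le (by linarith)) haN
    linarith
  have hEq : F * (1 - w + w * (1 - p) * (w * p) ^ ℓ) = 1 - (w * p) ^ ℓ := by
    rw [ha]
    linear_combination (-1 : ℝ) * hcomb + (-(1-p) * p^ℓ * F) * hwsucc
  rw [eq_div_iff (ne_of_gt hD)]
  linear_combination (1 - w) * hEq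

end Aux

/-- generating-function identity for `P(L(n) < ℓ)`. -/
theorem stmt3 (p : ℝ) (hp : 0 < p) (hp1 : p < 1) (ℓ : ℕ) (hℓ : 1 ≤ ℓ)
    (w : ℝ) (hw : 0 < w) (hw1 : w < 1) :
    (1 - w) * ∑' n : ℕ, w ^ n * Pr p n {x | longestRun x n < ℓ} =
      (1 - w) * (1 - (w * p) ^ ℓ) / (1 - w + w * (1 - p) * (w * p) ^ ℓ) := by
  have hp0 : (0:ℝ) ≤ p := hp.le
  have hp1' : p ≤ 1 := hp1.le
  exact analytic p hp hp1 ℓ hℓ w hw hw1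
    (fun n => Pr p n {x | longestRun x n < ℓ})
    (fun n => Pr_nonneg hp0 hp1' n _)
    (fun n => Pr_le_one hp0 hp1' n _)
    (fun n hn => f_small p hn)
    (f_ell p hℓ)
    (fun t => f_step p hℓ t)
end
end

section
/- Let h : Z₊* → ℝ be any function on the set of eventually-zero sequences of nonnegative integers, and let e_j be the j-th unit vector (e₀ = 0). Then for all n ≥ 1, E[h(R(n))] = q ∑_{j=0}^{n-1} p^j E[h(R(n-j-1) + e_j)] + p^n h(e_n), where R(n) = (R₁(n), R₂(n), ...) is the run-count vector of n i.i.d. Bernoulli(p) tosses and R(0) = 0. -/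
open scoped Classical
open Finset Filter

noncomputable section

/-- The unit vector `e_j` in the cone of eventually-zero sequences, with `e_0 = 0`. -/
def evec (j : ℕ) : ℕ → ℕ := fun i => if i = j ∧ 1 ≤ j then 1 else 0

def consB (b : Bool) (y : ℕ → Bool) : ℕ → Bool :=
  fun i => match i with | 0 => b | i+1 => y i

def prep (j : ℕ) (y : ℕ → Bool) : ℕ → Bool :=
  fun i => if i < j then true else y (i - j)

lemma prep_zero (y : ℕ → Bool) : prep 0 y = y := by
  funext i; simp [prep]

lemma prep_cons_true (j : ℕ) (y : ℕ → Bool) :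
    prep j (consB true y) = prep (j + 1) y := by
  funext i
  simp only [prep]
  by_cases h1 : i < j
  · rw [if_pos h1, if_pos (by omega)]
  · rw [if_neg h1]
    by_cases h2 : i = j
    · subst h2; rw [Nat.sub_self, if_pos (by omega)]; rfl
    · rw [if_neg (by omega), show i - j = (i - (j+1)) + 1 from by omega]; rfl

lemma prep_cons_false (j : ℕ) (y : ℕ → Bool) :
    prep j (consB false y) =
      fun i => if i < j then true else if i = j then false else y (i - j - 1) := by
  funext i
  simp only [prep]
  by_cases h1 : i < j
  · rw [if_pos h1, if_pos h1]
  · rw [if_neg h1, if_neg h1]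
    by_cases h2 : i = j
    · subst h2; rw [if_pos rfl, Nat.sub_self]; rfl
    · rw [if_neg h2, show i - j = (i - j - 1) + 1 from by omega]; rfl

lemma pad_cons {m : ℕ} (b : Bool) (y : Fin m → Bool) :
    pad (Fin.cons b y) = consB b (pad y) := by
  funext i
  cases i with
  | zero => simp [pad, consB]
  | succ k =>
    simp only [pad, consB]
    by_cases hk : k < m
    · rw [dif_pos (by omega : k + 1 < m + 1), dif_pos hk]
      exact congrArg _ rfl
    · rw [dif_neg (by omega), dif_neg hk]

lemma Ex_succ (p : ℝ) (m : ℕ) (f : (ℕ → Bool) → ℝ) :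
    Ex p (m+1) f = (1-p) * Ex p m (fun y => f (consB false y))
      + p * Ex p m (fun y => f (consB true y)) := by
  rw [Ex, ← Equiv.sum_comp (Fin.consEquiv (fun _ : Fin (m+1) => Bool))]
  rw [Fintype.sum_prod_type]
  rw [Fintype.sum_bool]
  have hw : ∀ (b : Bool) (y : Fin m → Bool),
      wt p (Fin.cons b y) = (if b then p else 1 - p) * wt p y := by
    intro b y
    rw [wt, Fin.prod_univ_succ]
    simp only [Fin.cons_zero, Fin.cons_succ]
    rfl
  show (∑ y : Fin m → Bool, wt p (Fin.cons true y) * f (pad (Fin.cons true y)))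
      + (∑ y : Fin m → Bool, wt p (Fin.cons false y) * f (pad (Fin.cons false y))) = _
  simp only [hw, pad_cons]
  simp only [Ex, Finset.mul_sum]
  rw [add_comm]
  congr 1 <;> (apply Finset.sum_congr rfl; intro y _; simp; ring)

lemma runCount_eq_sum (x : ℕ → Bool) (n ℓ : ℕ) :
    runCount x n ℓ = ∑ i ∈ Finset.range n, if IsRunAt x n i ℓ then 1 else 0 :=
  Finset.card_filter _ _

lemma runCount_cons_false (y : ℕ → Bool) (j m ℓ : ℕ) :
    runCount (fun i => if i < j then true else if i = j then false else y (i - j - 1))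
      (j + 1 + m) ℓ = runCount y m ℓ + evec j ℓ := by
  set x : ℕ → Bool :=
    fun i => if i < j then true else if i = j then false else y (i - j - 1) with hxdef
  have hxlt : ∀ t, t < j → x t = true := by
    intro t ht; simp only [hxdef]; rw [if_pos ht]
  have hxj : x j = false := by
    simp [hxdef]
  have hxgt : ∀ t, x (j + 1 + t) = y t := by
    intro t
    simp only [hxdef]
    rw [if_neg (by omega), if_neg (by omega)]
    congr 1; omega
  rw [runCount_eq_sum, runCount_eq_sum, show j + 1 + m = (j+1) + m from rfl,
    Finset.sum_range_add]
  have h2 : ∀ i, IsRunAt x ((j+1) + m) (j + 1 + i) ℓ ↔ IsRunAt y m i ℓ := by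
    intro i
    constructor
    · rintro ⟨h1, h2, h3, h4, h5⟩
      refine ⟨h1, by omega, ?_, ?_, ?_⟩
      · intro k hk
        have := h3 k hk
        rwa [show j + 1 + i + k = j + 1 + (i + k) from by omega, hxgt] at this
      · rcases Nat.eq_zero_or_pos i with hi | hi
        · exact Or.inl hi
        · right
          rcases h4 with h4 | h4
          · omega
          · rwa [show j + 1 + i - 1 = j + 1 + (i - 1) from by omega, hxgt] at h4
      · rcases h5 with h5 | h5
        · left; omega
        · right
          rwa [show j + 1 + i + ℓ = j + 1 + (i + ℓ) from by omega, hxgt] at h5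
    · rintro ⟨h1, h2, h3, h4, h5⟩
      refine ⟨h1, by omega, ?_, ?_, ?_⟩
      · intro k hk
        rw [show j + 1 + i + k = j + 1 + (i + k) from by omega, hxgt]
        exact h3 k hk
      · right
        rcases Nat.eq_zero_or_pos i with hi | hi
        · subst hi; rw [show j + 1 + 0 - 1 = j from by omega]; exact hxj
        · rw [show j + 1 + i - 1 = j + 1 + (i - 1) from by omega, hxgt]
          rcases h4 with h4 | h4
          · omega
          · exact h4
      · rcases h5 with h5 | h5
        · left; omega
        · right
          rw [show j + 1 + i + ℓ = j + 1 + (i + ℓ) from by omega, hxgt]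
          exact h5
  have hsum2 : (∑ i ∈ Finset.range m,
      if IsRunAt x ((j+1) + m) ((j+1) + i) ℓ then 1 else 0) =
      ∑ i ∈ Finset.range m, if IsRunAt y m i ℓ then 1 else 0 := by
    apply Finset.sum_congr rfl
    intro i _
    simp only [h2 i]
  have hsum1 : (∑ i ∈ Finset.range (j+1),
      if IsRunAt x ((j+1) + m) i ℓ then 1 else 0) = evec j ℓ := by
    rcases Nat.eq_zero_or_pos j with hj | hj
    · subst hj
      rw [Finset.sum_range_one]
      have hno : ¬ IsRunAt x (0 + 1 + m) 0 ℓ := by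
        rintro ⟨h1, _, h3, _, _⟩
        have := h3 0 (by omega)
        rw [show (0:ℕ) + 0 = 0 from rfl, hxj] at this
        exact absurd this (by decide)
      rw [if_neg hno]
      simp [evec]
    · rw [Finset.sum_range_succ']
      have hz : ∀ i ∈ Finset.range j,
          (if IsRunAt x ((j+1) + m) (i+1) ℓ then (1:ℕ) else 0) = 0 := by
        intro i hi
        rw [if_neg]
        rintro ⟨h1, h2', h3, h4, h5⟩
        rcases h4 with h4 | h4
        · omega
        · rw [show i + 1 - 1 = i from rfl, hxlt i (Finset.mem_range.mp hi)] at h4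
          exact absurd h4 (by decide)
      rw [Finset.sum_eq_zero hz, zero_add]
      have hiff : IsRunAt x ((j+1) + m) 0 ℓ ↔ ℓ = j := by
        constructor
        · rintro ⟨h1, h2', h3, h4, h5⟩
          by_contra hne
          rcases Nat.lt_or_ge ℓ j with hlt | hge
          · rcases h5 with h5 | h5
            · omega
            · rw [Nat.zero_add, hxlt ℓ hlt] at h5
              exact absurd h5 (by decide)
          · have hgt : j < ℓ := by omega
            have := h3 j hgt
            rw [Nat.zero_add, hxj] at this
            exact absurd this (by decide)
        · rintro rfl
          refine ⟨hj, by omega, ?_, Or.inl rfl, Or.inr ?_⟩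
          · intro k hk; rw [Nat.zero_add]; exact hxlt k hk
          · rw [Nat.zero_add]; exact hxj
      rw [show (if IsRunAt x ((j+1) + m) 0 ℓ then (1:ℕ) else 0)
          = if ℓ = j then 1 else 0 from by simp only [hiff]]
      simp only [evec]
      by_cases hlj : ℓ = j
      · rw [if_pos hlj, if_pos ⟨hlj, hj⟩]
      · rw [if_neg hlj, if_neg (by tauto)]
  rw [hsum1, hsum2, Nat.add_comm]

lemma runCount_prepFF (j ℓ : ℕ) :
    runCount (fun i => if i < j then true else false) j ℓ = evec j ℓ := by
  set x : ℕ → Bool := fun i => if i < j then true else false with hxdef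
  have hxlt : ∀ t, t < j → x t = true := by
    intro t ht; simp only [hxdef]; rw [if_pos ht]
  cases j with
  | zero =>
    rw [runCount_eq_sum, Finset.range_zero, Finset.sum_empty]
    simp [evec]
  | succ j' =>
    rw [runCount_eq_sum, Finset.sum_range_succ']
    have hz : ∀ i ∈ Finset.range j',
        (if IsRunAt x (j'+1) (i+1) ℓ then (1:ℕ) else 0) = 0 := by
      intro i hi
      rw [if_neg]
      rintro ⟨h1, h2', h3, h4, h5⟩
      rcases h4 with h4 | h4
      · omega
      · rw [show i + 1 - 1 = i from rfl, hxlt i (by omega)] at h4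
        exact absurd h4 (by decide)
    rw [Finset.sum_eq_zero hz, zero_add]
    have hiff : IsRunAt x (j'+1) 0 ℓ ↔ ℓ = j' + 1 := by
      constructor
      · rintro ⟨h1, h2', h3, h4, h5⟩
        by_contra hne
        have hlt : ℓ < j' + 1 := by omega
        rcases h5 with h5 | h5
        · omega
        · rw [Nat.zero_add] at h5
          rw [hxlt ℓ hlt] at h5
          exact absurd h5 (by decide)
      · rintro rfl
        exact ⟨by omega, by omega,
          fun k hk => by rw [Nat.zero_add]; exact hxlt k hk, Or.inl rfl,
          Or.inl (Nat.zero_add _)⟩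
    rw [show (if IsRunAt x (j'+1) 0 ℓ then (1:ℕ) else 0)
        = if ℓ = j' + 1 then 1 else 0 from by simp only [hiff]]
    simp only [evec]
    by_cases hlj : ℓ = j' + 1
    · rw [if_pos hlj, if_pos ⟨hlj, by omega⟩]
    · rw [if_neg hlj, if_neg (by tauto)]

lemma key (p : ℝ) (h : (ℕ → ℕ) → ℝ) :
    ∀ n j, Ex p n (fun x => h (fun ℓ => runCount (prep j x) (j + n) ℓ)) =
      (1 - p) * ∑ i ∈ Finset.range n, p ^ i *
          Ex p (n - i - 1)
            (fun x => h (fun ℓ => runCount x (n - i - 1) ℓ + evec (j + i) ℓ)) +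
        p ^ n * h (evec (j + n)) := by
  intro n
  induction n with
  | zero =>
    intro j
    simp only [Finset.range_zero, Finset.sum_empty, mul_zero, zero_add, pow_zero,
      one_mul, Nat.add_zero]
    have hpad : ∀ x : Fin 0 → Bool, pad x = fun _ => false := by
      intro x; funext i; simp [pad]
    have hb : (fun ℓ => runCount (prep j (fun _ => false)) j ℓ) = evec j := by
      funext ℓ
      have : prep j (fun _ => false) = fun i => if i < j then true else false := by
        funext i; simp [prep]
      rw [this]
      exact runCount_prepFF j ℓ
    simp [Ex, wt, hpad, hb]
  | succ n ih =>
    intro j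
    rw [Ex_succ]
    have hfalse : (fun y => h (fun ℓ => runCount (prep j (consB false y)) (j + (n+1)) ℓ))
        = fun y => h (fun ℓ => runCount y n ℓ + evec j ℓ) := by
      funext y
      congr 1
      funext ℓ
      rw [prep_cons_false, show j + (n+1) = j + 1 + n from by omega]
      exact runCount_cons_false y j n ℓ
    have htrue : (fun y => h (fun ℓ => runCount (prep j (consB true y)) (j + (n+1)) ℓ))
        = fun y => h (fun ℓ => runCount (prep (j+1) y) ((j+1) + n) ℓ) := by
      funext y
      rw [prep_cons_true, show j + (n+1) = (j+1) + n from by omega]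
    rw [hfalse, htrue, ih (j+1)]
    rw [Finset.sum_range_succ']
    simp only [Nat.succ_sub_succ_eq_sub, pow_zero, one_mul, Nat.add_zero, Nat.sub_zero,
      Nat.zero_add]
    have hsum : (∑ i ∈ Finset.range n, p ^ (i + 1) *
          Ex p (n - i - 1)
            (fun x => h fun ℓ => runCount x (n - i - 1) ℓ + evec (j + (i + 1)) ℓ))
        = p * ∑ i ∈ Finset.range n, p ^ i *
            Ex p (n - i - 1)
              (fun x => h fun ℓ => runCount x (n - i - 1) ℓ + evec (j + 1 + i) ℓ) := by
      rw [Finset.mul_sum]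
      apply Finset.sum_congr rfl
      intro i _
      rw [show j + (i + 1) = j + 1 + i from by omega, pow_succ']
      ring
    rw [hsum, show j + (n + 1) = j + 1 + n from by omega]
    ring

/-- portmanteau recursion in the time domain. -/
theorem stmt10 (p : ℝ) (hp : 0 < p) (hp1 : p < 1) (h : (ℕ → ℕ) → ℝ)
    (n : ℕ) (hn : 1 ≤ n) :
    Ex p n (fun x => h (fun ℓ => runCount x n ℓ)) =
      (1 - p) * ∑ j ∈ Finset.range n, p ^ j *
          Ex p (n - j - 1) (fun x => h (fun ℓ => runCount x (n - j - 1) ℓ + evec j ℓ)) +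
        p ^ n * h (evec n) := by
  have K := key p h n 0
  simp only [Nat.zero_add] at K
  have hprep : (fun x => h (fun ℓ => runCount (prep 0 x) n ℓ))
      = (fun x => h (fun ℓ => runCount x n ℓ)) := by
    funext x; rw [prep_zero]
  rw [hprep] at K
  exact K
end
end
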